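/- arXiv:2308.14535 — 7 statements merged into one kernel-verified Lean document; each statement's English description precedes it below -/
import Mathlib

section
/- Let D be a Krull domain and Σ a positive integer. Then there are only finitely many height-one prime ideals Q of D such that the residue ring D/Q has cardinality at most Σ. -/
open Polynomial

/-- A height-one prime ideal: a minimal nonzero prime. -/
def HeightOnePrime (D : Type*) [CommRing D] (P : Ideal D) : Prop :=
  P.IsPrime ∧ P ≠ ⊥ ∧ ∀ Q : Ideal D, Q.IsPrime → Q < P → Q = ⊥

/-- A Krull domain: localizations at height-one primes are DVRs, every nonzero element
lies in only finitely many height-one primes, and `D` is the intersection of its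
localizations at height-one primes inside its quotient field. -/
def IsKrullDomain (D : Type*) [CommRing D] [IsDomain D] : Prop :=
  (∀ P : Ideal D, ∀ h : HeightOnePrime D P,
      letI : P.IsPrime := h.1
      IsDiscreteValuationRing (Localization.AtPrime P)) ∧
  (∀ x : D, x ≠ 0 → {P : Ideal D | HeightOnePrime D P ∧ x ∈ P}.Finite) ∧
  (∀ x : FractionRing D,
    (∀ P : Ideal D, HeightOnePrime D P →
      ∃ a b : D, b ∉ P ∧ x * algebraMap D (FractionRing D) b = algebraMap D (FractionRing D) a) →
    ∃ d : D, x = algebraMap D (FractionRing D) d)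

/-!
Put `n = Σ!`. If `|D/Q| ≤ Σ`, then `D/Q` is a finite field whose multiplicative group has order
dividing `n`, so `a ^ (n + 1) - a ∈ Q` for every `a ∈ D`. Either some `a ^ (n + 1) - a` is
nonzero, and then it lies in only finitely many height-one primes; or `a ^ (n + 1) = a`
throughout `D`, which makes `D` a field without any nonzero prime.
-/

open scoped Nat

theorem pow_succ_eq_self_of_card_sub_one_dvd {R : Type*} [CommRing R] [IsDomain R] [Finite R]
    {m : ℕ} (hm : Nat.card R - 1 ∣ m) (a : R) : a ^ (m + 1) = a := by
  let _ : Fintype R := Fintype.ofFinite R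
  let _ : Field R := (Finite.isField_of_domain R).toField
  rcases eq_or_ne a 0 with rfl | ha
  · exact zero_pow m.succ_ne_zero
  obtain ⟨k, rfl⟩ := hm
  rw [Nat.card_eq_fintype_card, pow_succ, pow_mul, FiniteField.pow_card_sub_one_eq_one a ha,
    one_pow, one_mul]

theorem Ideal.pow_factorial_succ_sub_mem {R : Type*} [CommRing R] {Q : Ideal R} [Q.IsPrime]
    {N : ℕ} (hQ : Cardinal.mk (R ⧸ Q) ≤ N) (a : R) : a ^ (N ! + 1) - a ∈ Q := by
  have : Finite (R ⧸ Q) :=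
    Cardinal.lt_aleph0_iff_finite.mp (hQ.trans_lt Cardinal.natCast_lt_aleph0)
  have hcard : Nat.card (R ⧸ Q) ≤ N := by rwa [← Nat.cast_le (α := Cardinal), Nat.cast_card]
  have hpos : 0 < Nat.card (R ⧸ Q) - 1 := Nat.sub_pos_of_lt Finite.one_lt_card
  rw [← Ideal.Quotient.eq_zero_iff_mem, map_sub, map_pow, sub_eq_zero]
  exact pow_succ_eq_self_of_card_sub_one_dvd (Nat.dvd_factorial hpos (by omega)) _

theorem Ideal.eq_bot_of_forall_pow_succ_eq_self {R : Type*} [CommRing R] [IsDomain R] {m : ℕ}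
    (hm : 0 < m) (h : ∀ a : R, a ^ (m + 1) = a) {Q : Ideal R} (hQ : Q ≠ ⊤) : Q = ⊥ := by
  refine (Submodule.eq_bot_iff Q).mpr fun p hp => by_contra fun hp0 => hQ ?_
  have hunit : p ^ m = 1 := mul_left_cancel₀ hp0 (by rw [← pow_succ', h, mul_one])
  exact Q.eq_top_of_isUnit_mem (Q.pow_mem_of_mem hp m hm) (hunit ▸ isUnit_one)

theorem stmt2_general (D : Type*) [CommRing D] [IsDomain D] (hD : IsKrullDomain D)
    (Sig : ℕ) :
    {Q : Ideal D | HeightOnePrime D Q ∧ Cardinal.mk (D ⧸ Q) ≤ (Sig : Cardinal)}.Finite := by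
  by_cases hall : ∀ a : D, a ^ (Sig ! + 1) = a
  · refine Set.finite_empty.subset fun Q ⟨⟨hprime, hne, _⟩, _⟩ => hne ?_
    exact Ideal.eq_bot_of_forall_pow_succ_eq_self (Nat.factorial_pos Sig) hall hprime.ne_top
  · push Not at hall
    obtain ⟨a, ha⟩ := hall
    refine (hD.2.1 _ (sub_ne_zero.mpr ha)).subset fun Q ⟨hQ, hcard⟩ => ⟨hQ, ?_⟩
    have := hQ.1
    exact Ideal.pow_factorial_succ_sub_mem hcard a

/-- In a Krull domain there are only finitely many height-one primes `Q` with
`|D/Q| ≤ N`. -/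
theorem stmt2 (D : Type*) [CommRing D] [IsDomain D] (hD : IsKrullDomain D)
    (Sig : ℕ) (hSig : 0 < Sig) :
    {Q : Ideal D | HeightOnePrime D Q ∧ Cardinal.mk (D ⧸ Q) ≤ (Sig : Cardinal)}.Finite :=
  stmt2_general D hD Sig
end

section
/- Let k > 2 and 1 < n_1 ≤ ... ≤ n_k be integers, and let I ⊆ [n_1] × ... × [n_k]. Suppose that for every coordinate direction i ∈ {1,...,k} and every r ∈ [n_i], the intersection I ∩ H_i(r) equals H_{i,j}(r, T) for some j ≠ i and some T ⊆ [n_j] (i.e., every intersection of I with a (k−1)-dimensional coordinate hyperplane is a union of parallel (k−2)-dimensional coordinate hyperplanes within it). Then I = H_ℓ(S) for some ℓ ∈ {1,...,k} and S ⊆ [n_ℓ], i.e., I is a union of parallel (k−1)-dimensional coordinate hyperplanes. -/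
/-!
Take any slice `x i = r`; inside it `I` is cut out by `x j ∈ T`. Every slice `x j = s` is cut out
by some coordinate `m`; when `m ≠ i`, moving `x i` to `r` keeps membership in `I` unchanged and
lands in the first slice, so the slice `x j = s` of `I` is full or empty. Hence membership in `I`
depends only on `x i` and `x j`, a third coordinate `m` is irrelevant, and the description
`x p ∈ V` of a slice `x m = c` extends to all of `I`.
-/

open Function Set

section CoordinateSlices

variable {ι : Type*} {α : ι → Type*} {I : Set (∀ i, α i)}

theorem inter_setOf_apply_eq_iff {i j : ι} {r : α i} {T : Set (α j)} :
    I ∩ {x | x i = r} = {x | x i = r ∧ x j ∈ T} ↔ ∀ x, x i = r → (x ∈ I ↔ x j ∈ T) := by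
  simp only [Set.ext_iff, mem_inter_iff]
  grind

theorem exists_forall_apply_eq_mem_iff_of_slice {i j : ι} (hij : i ≠ j) {r : α i}
    {T : Set (α j)} (hr : ∀ x, x i = r → (x ∈ I ↔ x j ∈ T)) {s : α j} {m : ι}
    {U : Set (α m)} (hs : ∀ x, x j = s → (x ∈ I ↔ x m ∈ U)) :
    ∃ V : Set (α i), ∀ x, x j = s → (x ∈ I ↔ x i ∈ V) := by
  classical
  by_cases hmi : m = i
  · subst hmi
    exact ⟨U, hs⟩
  refine ⟨{_a | s ∈ T}, fun x hx => ?_⟩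
  have hupdate : update x i r j = s := by rw [update_of_ne hij.symm, hx]
  calc x ∈ I ↔ x m ∈ U := hs x hx
    _ ↔ update x i r ∈ I := by rw [hs _ hupdate, update_of_ne hmi]
    _ ↔ s ∈ T := by rw [hr _ (update_self ..), hupdate]

theorem dependsOn_mem_pair_of_slices {i j : ι} (hij : i ≠ j) {r : α i} {T : Set (α j)}
    (hr : ∀ x, x i = r → (x ∈ I ↔ x j ∈ T))
    (hslices : ∀ s : α j, ∃ m, ∃ U : Set (α m), ∀ x, x j = s → (x ∈ I ↔ x m ∈ U)) :
    DependsOn (· ∈ I) {i, j} := by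
  intro x y hxy
  obtain ⟨m, U, hs⟩ := hslices (x j)
  obtain ⟨V, hV⟩ := exists_forall_apply_eq_mem_iff_of_slice hij hr hs
  have hyj : y j = x j := (hxy j (by simp)).symm
  simp only [hV x rfl, hV y hyj, hxy i (by simp)]

theorem eq_setOf_of_dependsOn_of_slice {s : Set ι} (hI : DependsOn (· ∈ I) s) {m : ι}
    (hm : m ∉ s) {c : α m} {p : ι} (hpm : p ≠ m) {V : Set (α p)}
    (hc : ∀ x, x m = c → (x ∈ I ↔ x p ∈ V)) :
    I = {x | x p ∈ V} := by
  classical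
  ext x
  have hupdate : (update x m c ∈ I) = (x ∈ I) :=
    hI fun l hl => update_of_ne (ne_of_mem_of_not_mem hl hm) c x
  rw [← hupdate, hc _ (update_self ..), update_of_ne hpm]
  rfl

theorem exists_eq_setOf_apply_mem_of_forall_slice (hι : 3 ≤ ENat.card ι)
    (hI : ∀ (i : ι) (r : α i), ∃ j : ι, j ≠ i ∧ ∃ T : Set (α j),
      I ∩ {x | x i = r} = {x | x i = r ∧ x j ∈ T}) :
    ∃ (ℓ : ι) (S : Set (α ℓ)), I = {x | x ℓ ∈ S} := by
  simp only [inter_setOf_apply_eq_iff] at hI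
  obtain ⟨i⟩ := (ENat.one_le_card_iff_nonempty ι).mp (le_trans (by norm_num) hι)
  rcases I.eq_empty_or_nonempty with rfl | ⟨x₀, -⟩
  · exact ⟨i, ∅, by simp⟩
  obtain ⟨j, hji, T, hT⟩ := hI i (x₀ i)
  have hdep : DependsOn (· ∈ I) {i, j} :=
    dependsOn_mem_pair_of_slices hji.symm hT fun s => (hI j s).imp fun _ h => h.2
  obtain ⟨m, hmi, hmj⟩ := ENat.exists_ne_ne_of_three_le hι i j
  obtain ⟨p, hpm, V, hV⟩ := hI m (x₀ m)
  exact ⟨p, V, eq_setOf_of_dependsOn_of_slice hdep (by simp [hmi, hmj]) hpm hV⟩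

end CoordinateSlices

theorem stmt4_general (k : ℕ) (hk : 2 < k) (n : Fin k → ℕ)
    (I : Set (∀ i : Fin k, Fin (n i)))
    (hI : ∀ (i : Fin k) (r : Fin (n i)), ∃ j : Fin k, j ≠ i ∧ ∃ T : Set (Fin (n j)),
      I ∩ {x | x i = r} = {x | x i = r ∧ x j ∈ T}) :
    ∃ (ℓ : Fin k) (S : Set (Fin (n ℓ))), I = {x | x ℓ ∈ S} :=
  exists_eq_setOf_apply_mem_of_forall_slice (by simpa using mod_cast hk) hI

/-- If every intersection of `I ⊆ [n_1] × ⋯ × [n_k]` with a `(k-1)`-dimensional coordinate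
hyperplane is a union of parallel `(k-2)`-dimensional coordinate hyperplanes, then `I` is a
union of parallel `(k-1)`-dimensional coordinate hyperplanes. -/
theorem stmt4 (k : ℕ) (hk : 2 < k) (n : Fin k → ℕ) (hn : ∀ i, 1 < n i) (hmono : Monotone n)
    (I : Set (∀ i : Fin k, Fin (n i)))
    (hI : ∀ (i : Fin k) (r : Fin (n i)), ∃ j : Fin k, j ≠ i ∧ ∃ T : Set (Fin (n j)),
      I ∩ {x | x i = r} = {x | x i = r ∧ x j ∈ T}) :
    ∃ (ℓ : Fin k) (S : Set (Fin (n ℓ))), I = {x | x ℓ ∈ S} :=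
  stmt4_general k hk n I hI
end

section
/- Let k > 1 and 1 < n_1 ≤ ... ≤ n_k be integers. Let I ⊆ [n_1] × ... × [n_k] be a non-empty subset that is not of the form H_ℓ(S) for any ℓ ∈ {1,...,k} and S ⊆ [n_ℓ]. Then there exists a k-dimensional array M ∈ ℚ^{n_1 × ... × n_k} such that for every coordinate direction ℓ and every r ∈ [n_ℓ] the sum of the entries of M over the hyperplane H_ℓ(r) is 0, but the sum of the entries of M over I is nonzero. -/
/-!
If no such array exists, the functional `M ↦ ∑_{x ∈ I} M x` vanishes on the common kernel of the
hyperplane-sum functionals, hence is a linear combination of them; evaluated at the unit arrays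
this writes the indicator of `I` as a separable function `x ↦ ∑_ℓ f_ℓ (x_ℓ)`. A separable
`{0, 1}`-valued function depends on at most one coordinate: if `f_ℓ (a) ≠ f_ℓ (b)`, then moving
`x_ℓ` from `a` to `b` flips the value, so the value at `b` is one minus the value at `a` for every
choice of the other coordinates, and subtracting two such identities gives
`2 f_m (c) = 2 f_m (d)` for every other coordinate `m`. So `I` is a union of hyperplanes `H_ℓ(S)`.
-/

open Finset Function

theorem exists_sum_eq_indicator_of_forall_sum_eq_zero {X ι K : Type*} [Fintype X]
    [DecidableEq X] [Fintype ι] [Field K] (s : Finset X) (T : ι → Finset X)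
    (h : ∀ M : X → K, (∀ j, ∑ x ∈ T j, M x = 0) → ∑ x ∈ s, M x = 0) :
    ∃ c : ι → K, ∀ y, ∑ j, (if y ∈ T j then c j else 0) = if y ∈ s then 1 else 0 := by
  let sumOver : Finset X → (X → K) →ₗ[K] K := fun t => ∑ x ∈ t, LinearMap.proj x
  have hker : ⨅ j, LinearMap.ker (sumOver (T j)) ≤ LinearMap.ker (sumOver s) := fun M hM => by
    simp_all [sumOver, Submodule.mem_iInf]
  obtain ⟨c, hc⟩ :=
    (Submodule.mem_span_range_iff_exists_fun K).1 (mem_span_of_iInf_ker_le_ker hker)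
  refine ⟨c, fun y => ?_⟩
  simpa [sumOver, Pi.single_apply] using LinearMap.congr_fun hc (Pi.single y 1)

theorem forall_eq_or_forall_eq_of_add_eq_zero_or_one {α β K : Type*} [Field K]
    (h2 : (2 : K) ≠ 0) {p : α → K} {q : β → K} (h : ∀ s t, p s + q t = 0 ∨ p s + q t = 1) :
    (∀ a b, p a = p b) ∨ (∀ c d, q c = q d) := by
  by_contra! ⟨⟨a, b, hab⟩, ⟨c, d, hcd⟩⟩
  have add_eq_one : ∀ {u v : K}, (u = 0 ∨ u = 1) → (v = 0 ∨ v = 1) → u ≠ v → u + v = 1 := by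
    rintro u v (rfl | rfl) (rfl | rfl) huv <;> simp_all
  have hc := add_eq_one (h a c) (h b c) (by simpa using hab)
  have hd := add_eq_one (h a d) (h b d) (by simpa using hab)
  exact hcd (mul_left_cancel₀ h2 (by linear_combination hc - hd))

section

variable {ι K : Type*} [Fintype ι] {α : ι → Type*} [Field K]

theorem exists_sum_apply_eq_indicator_of_forall_hyperplane_sum_eq_zero [DecidableEq ι]
    [∀ i, Fintype (α i)] [∀ i, DecidableEq (α i)] (I : Finset (∀ i, α i))
    (h : ∀ M : (∀ i, α i) → K,
      (∀ ℓ r, ∑ x ∈ univ.filter (fun x => x ℓ = r), M x = 0) → ∑ x ∈ I, M x = 0) :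
    ∃ f : ∀ i, α i → K, ∀ x, ∑ i, f i (x i) = if x ∈ I then 1 else 0 := by
  obtain ⟨c, hc⟩ := exists_sum_eq_indicator_of_forall_sum_eq_zero I
    (fun p : Σ ℓ, α ℓ => univ.filter (fun x => x p.1 = p.2))
    (fun M hM => h M fun ℓ r => hM ⟨ℓ, r⟩)
  refine ⟨fun ℓ r => c ⟨ℓ, r⟩, fun x => ?_⟩
  simpa [Fintype.sum_sigma] using hc x

theorem sum_apply_update {M : Type*} [DecidableEq ι] [AddCommGroup M] (f : ∀ i, α i → M)
    (x : ∀ i, α i) (ℓ : ι) (a : α ℓ) :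
    ∑ i, f i (update x ℓ a i) = ∑ i, f i (x i) - f ℓ (x ℓ) + f ℓ a := by
  rw [sum_eq_add_sum_sdiff_singleton_of_mem (mem_univ ℓ) (fun i => f i (x i))]
  simp_rw [apply_update f, sum_update_of_mem (mem_univ ℓ)]
  abel

theorem forall_eq_or_forall_eq_of_sum_apply_eq_zero_or_one [DecidableEq ι]
    [∀ i, Nonempty (α i)] (h2 : (2 : K) ≠ 0) {f : ∀ i, α i → K}
    (hf : ∀ x : ∀ i, α i, ∑ i, f i (x i) = 0 ∨ ∑ i, f i (x i) = 1) {ℓ m : ι} (hℓm : ℓ ≠ m) :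
    (∀ a b, f ℓ a = f ℓ b) ∨ (∀ c d, f m c = f m d) := by
  let x₀ : ∀ i, α i := fun i => Classical.arbitrary (α i)
  set C := ∑ i, f i (x₀ i) - f ℓ (x₀ ℓ) - f m (x₀ m)
  have hsum : ∀ s t, ∑ i, f i (update (update x₀ ℓ s) m t i) = (C + f ℓ s) + f m t := by
    intro s t
    rw [sum_apply_update, sum_apply_update, update_of_ne hℓm.symm]
    ring
  exact (forall_eq_or_forall_eq_of_add_eq_zero_or_one h2 (p := fun s => C + f ℓ s)
    fun s t => hsum s t ▸ hf _).imp (fun h a b => add_left_cancel (h a b)) id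

theorem exists_forall_ne_forall_eq_of_sum_apply_eq_zero_or_one [DecidableEq ι] [Nonempty ι]
    [∀ i, Nonempty (α i)] (h2 : (2 : K) ≠ 0) {f : ∀ i, α i → K}
    (hf : ∀ x : ∀ i, α i, ∑ i, f i (x i) = 0 ∨ ∑ i, f i (x i) = 1) :
    ∃ ℓ, ∀ i ≠ ℓ, ∀ a b, f i a = f i b := by
  by_cases hex : ∃ ℓ a b, f ℓ a ≠ f ℓ b
  · obtain ⟨ℓ, a, b, hab⟩ := hex
    refine ⟨ℓ, fun i hi => ?_⟩
    exact (forall_eq_or_forall_eq_of_sum_apply_eq_zero_or_one h2 hf hi.symm).resolve_left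
      fun h => hab (h a b)
  · push Not at hex
    exact ⟨Classical.arbitrary ι, fun i _ => hex i⟩

theorem sum_apply_eq_of_apply_eq {f : ∀ i, α i → K} {ℓ : ι}
    (hf : ∀ i ≠ ℓ, ∀ a b, f i a = f i b) {x y : ∀ i, α i} (hxy : x ℓ = y ℓ) :
    ∑ i, f i (x i) = ∑ i, f i (y i) := by
  refine sum_congr rfl fun i _ => ?_
  obtain rfl | hi := eq_or_ne i ℓ
  · rw [hxy]
  · exact hf i hi _ _

theorem eq_filter_mem_image_of_mem_iff [DecidableEq ι] [∀ i, Fintype (α i)]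
    [∀ i, DecidableEq (α i)] (I : Finset (∀ i, α i)) (ℓ : ι)
    (hI : ∀ x y, x ℓ = y ℓ → x ∈ I → y ∈ I) :
    I = univ.filter (fun x => x ℓ ∈ I.image (· ℓ)) := by
  ext x
  simp only [mem_filter, mem_univ, true_and, mem_image]
  exact ⟨fun hx => ⟨x, hx, rfl⟩, fun ⟨y, hy, hyx⟩ => hI y x hyx hy⟩

end

theorem stmt5_general (k : ℕ) (hk : 1 < k) (n : Fin k → ℕ) (hn : ∀ i, 1 < n i)
    (I : Finset (∀ i : Fin k, Fin (n i)))
    (hnotH : ¬ ∃ (ℓ : Fin k) (S : Finset (Fin (n ℓ))),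
      I = Finset.univ.filter (fun x => x ℓ ∈ S)) :
    ∃ M : (∀ i : Fin k, Fin (n i)) → ℚ,
      (∀ (ℓ : Fin k) (r : Fin (n ℓ)),
        ∑ x ∈ Finset.univ.filter (fun x => x ℓ = r), M x = 0) ∧
      ∑ x ∈ I, M x ≠ 0 := by
  by_contra! hcon
  obtain ⟨f, hf⟩ := exists_sum_apply_eq_indicator_of_forall_hyperplane_sum_eq_zero I hcon
  have : Nonempty (Fin k) := ⟨⟨0, by omega⟩⟩
  have (i : Fin k) : Nonempty (Fin (n i)) := ⟨⟨0, by grind⟩⟩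
  obtain ⟨ℓ, hℓ⟩ := exists_forall_ne_forall_eq_of_sum_apply_eq_zero_or_one two_ne_zero
    fun x => by rw [hf x]; split_ifs <;> simp
  refine hnotH ⟨ℓ, I.image (· ℓ), eq_filter_mem_image_of_mem_iff I ℓ fun x y hxy hx => ?_⟩
  have hsum := sum_apply_eq_of_apply_eq hℓ hxy
  rw [hf, hf, if_pos hx] at hsum
  by_contra hy
  simp [hy] at hsum

/-- If `I ⊆ [n_1] × ⋯ × [n_k]` is non-empty and not a union of parallel coordinate
hyperplanes `H_ℓ(S)`, then there is a rational array `M` all of whose coordinate-hyperplane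
sums vanish, but whose sum over `I` does not vanish (i.e. `Z \ Z_I ≠ ∅`). -/
theorem stmt5 (k : ℕ) (hk : 1 < k) (n : Fin k → ℕ) (hn : ∀ i, 1 < n i) (hmono : Monotone n)
    (I : Finset (∀ i : Fin k, Fin (n i))) (hne : I.Nonempty)
    (hnotH : ¬ ∃ (ℓ : Fin k) (S : Finset (Fin (n ℓ))),
      I = Finset.univ.filter (fun x => x ℓ ∈ S)) :
    ∃ M : (∀ i : Fin k, Fin (n i)) → ℚ,
      (∀ (ℓ : Fin k) (r : Fin (n ℓ)),
        ∑ x ∈ Finset.univ.filter (fun x => x ℓ = r), M x = 0) ∧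
      ∑ x ∈ I, M x ≠ 0 :=
  stmt5_general k hk n hn I hnotH
end

section
/- Let k be a positive integer and 1 < n_1 ≤ ... ≤ n_k integers. Then there exists an array M ∈ ℚ^{n_1 × ... × n_k} such that the sum of the entries of M over every coordinate hyperplane H_ℓ(r) is zero, and for every subset I ⊆ [n_1] × ... × [n_k], the sum of the entries of M over I is zero only if I = H_ℓ(S) for some ℓ ∈ {1,...,k} and S ⊆ [n_ℓ]. -/
/-! Arrays with vanishing hyperplane sums form a subspace `V`, and summing over `I` is a linear
functional. Over an infinite field finitely many functionals, none of which vanishes on `V`, have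
a common non-zero in `V`, so it suffices to detect every `I` that is not of the form `H_ℓ(S)` by
some element of `V`. The rectangle arrays `δ_x - δ_{x[ℓ↦r]} - δ_{x[m↦s]} + δ_{x[ℓ↦r, m↦s]}`
(`ℓ ≠ m`) lie in `V`. If all of them sum to zero over `I`, then, membership being `0/1`-valued,
once changing coordinate `ℓ` of some point changes its membership in `I`, changing any other
coordinate never does; hence membership depends on coordinate `ℓ` alone. -/

open Finset Function

theorem of_update_closed {ι : Type*} [DecidableEq ι] {α : ι → Type*} {P : (∀ i, α i) → Prop}
    (t : Finset ι) (hP : ∀ x, P x → ∀ m ∈ t, ∀ a, P (update x m a)) {x y : ∀ i, α i}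
    (hxy : ∀ i ∉ t, x i = y i) (hx : P x) : P y := by
  induction t using Finset.induction_on generalizing x with
  | empty => exact funext (fun i => hxy i (notMem_empty i)) ▸ hx
  | insert j t _ ih =>
    refine ih (fun z hz m hm => hP z hz m (mem_insert_of_mem hm)) (x := update x j (y j)) ?_
      (hP x hx j (mem_insert_self j t) (y j))
    intro i hi
    by_cases hij : i = j
    · subst hij; simp
    · rw [update_of_ne hij]; exact hxy i (by simp [hij, hi])

section Arrays

variable {K : Type*} [Field K] {ι : Type*} {α : ι → Type*}

variable (K) in
def sumOver (s : Finset (∀ i, α i)) : Module.Dual K ((∀ i, α i) → K) :=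
  ∑ x ∈ s, LinearMap.proj x

@[simp]
theorem sumOver_apply (s : Finset (∀ i, α i)) (M : (∀ i, α i) → K) :
    sumOver K s M = ∑ x ∈ s, M x := by
  simp [sumOver]

variable [Fintype ι] [DecidableEq ι] [∀ i, DecidableEq (α i)]

variable (K) in
def rectangleArray (x : ∀ i, α i) (ℓ m : ι) (r : α ℓ) (s : α m) : (∀ i, α i) → K :=
  Pi.single x 1 - Pi.single (update x ℓ r) 1 - Pi.single (update x m s) 1 +
    Pi.single (update (update x ℓ r) m s) 1

theorem sum_rectangleArray (I : Finset (∀ i, α i)) (x : ∀ i, α i) (ℓ m : ι) (r : α ℓ)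
    (s : α m) :
    ∑ y ∈ I, rectangleArray K x ℓ m r s y =
      (if x ∈ I then 1 else 0) - (if update x ℓ r ∈ I then 1 else 0) -
        (if update x m s ∈ I then 1 else 0) + (if update (update x ℓ r) m s ∈ I then 1 else 0) := by
  simp [rectangleArray, sum_add_distrib, sum_sub_distrib]

variable (K) in
def RectangleSumsVanish (I : Finset (∀ i, α i)) : Prop :=
  ∀ (x : ∀ i, α i) (ℓ m : ι), ℓ ≠ m → ∀ r s, ∑ y ∈ I, rectangleArray K x ℓ m r s y = 0

theorem RectangleSumsVanish.mem_update_iff [CharZero K] {I : Finset (∀ i, α i)}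
    (hR : RectangleSumsVanish K I) {x : ∀ i, α i} {ℓ m : ι} (hℓm : ℓ ≠ m) {r : α ℓ}
    (hr : ¬(update x ℓ r ∈ I ↔ x ∈ I)) (s : α m) :
    (update x m s ∈ I ↔ x ∈ I) ∧ (update (update x ℓ r) m s ∈ I ↔ update x ℓ r ∈ I) := by
  -- `[x ∈ I] - [x[ℓ↦r] ∈ I] = [x[m↦s] ∈ I] - [x[ℓ↦r, m↦s] ∈ I]` and the left side is `±1`.
  have h := hR x ℓ m hℓm r s
  rw [sum_rectangleArray] at h
  split_ifs at h <;> norm_num at h <;> tauto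

theorem RectangleSumsVanish.mem_iff_of_apply_eq [CharZero K] {I : Finset (∀ i, α i)}
    (hR : RectangleSumsVanish K I) {x : ∀ i, α i} {ℓ : ι} {r : α ℓ}
    (hr : ¬(update x ℓ r ∈ I ↔ x ∈ I)) {y : ∀ i, α i} (hy : x ℓ = y ℓ) : y ∈ I ↔ x ∈ I := by
  refine (of_update_closed (P := fun z => ¬(update z ℓ r ∈ I ↔ z ∈ I) ∧ (z ∈ I ↔ x ∈ I))
    (univ.erase ℓ) ?_ ?_ ⟨hr, Iff.rfl⟩).2
  · rintro z ⟨hz, hzx⟩ m hm a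
    have hmℓ : m ≠ ℓ := ne_of_mem_erase hm
    obtain ⟨hza, hzra⟩ := hR.mem_update_iff hmℓ.symm hz a
    rw [update_comm hmℓ]
    tauto
  · intro i hi
    rw [of_not_not (fun h => hi (mem_erase.2 ⟨h, mem_univ i⟩)), hy]

variable [∀ i, Fintype (α i)]

variable (K α) in
def zeroHyperplaneSums : Submodule K ((∀ i, α i) → K) :=
  ⨅ (ℓ : ι) (r : α ℓ), LinearMap.ker (sumOver K (univ.filter (fun x => x ℓ = r)))

theorem mem_zeroHyperplaneSums {M : (∀ i, α i) → K} :
    M ∈ zeroHyperplaneSums K α ↔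
      ∀ (ℓ : ι) (r : α ℓ), ∑ x ∈ univ.filter (fun x => x ℓ = r), M x = 0 := by
  simp [zeroHyperplaneSums, Submodule.mem_iInf]

def IsHyperplaneUnion (I : Finset (∀ i, α i)) : Prop :=
  ∃ (ℓ : ι) (S : Finset (α ℓ)), I = univ.filter (fun x => x ℓ ∈ S)

theorem rectangleArray_mem_zeroHyperplaneSums {ℓ m : ι} (hℓm : ℓ ≠ m) (x : ∀ i, α i) (r : α ℓ)
    (s : α m) : rectangleArray K x ℓ m r s ∈ zeroHyperplaneSums K α := by
  refine mem_zeroHyperplaneSums.mpr fun j t => ?_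
  rw [sum_rectangleArray]
  simp only [mem_filter, mem_univ, true_and]
  by_cases hjm : j = m
  · subst hjm; simp [update_of_ne hℓm.symm]
  · by_cases hjℓ : j = ℓ
    · subst hjℓ; simp [update_of_ne hjm]
    · simp [update_of_ne hjm, update_of_ne hjℓ]


theorem RectangleSumsVanish.isHyperplaneUnion [CharZero K] [Nonempty ι] {I : Finset (∀ i, α i)}
    (hR : RectangleSumsVanish K I) :
    IsHyperplaneUnion I := by
  by_cases hact : ∃ (x : ∀ i, α i) (ℓ : ι) (r : α ℓ), ¬(update x ℓ r ∈ I ↔ x ∈ I)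
  · obtain ⟨x, ℓ, r, hr⟩ := hact
    refine ⟨ℓ, univ.filter (fun a => update x ℓ a ∈ I), ?_⟩
    ext y
    simp only [mem_filter, mem_univ, true_and]
    obtain ⟨r', hr'⟩ : ∃ r', ¬(update (update x ℓ (y ℓ)) ℓ r' ∈ I ↔ update x ℓ (y ℓ) ∈ I) := by
      by_cases h : update x ℓ (y ℓ) ∈ I ↔ update x ℓ r ∈ I
      · exact ⟨x ℓ, by simp only [update_idem, update_eq_self]; tauto⟩
      · exact ⟨r, by simp only [update_idem]; tauto⟩
    exact hR.mem_iff_of_apply_eq hr' (update_self ℓ (y ℓ) x)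
  · push Not at hact
    obtain ⟨ℓ⟩ := ‹Nonempty ι›
    rcases I.eq_empty_or_nonempty with rfl | ⟨x₀, hx₀⟩
    · exact ⟨ℓ, ∅, by simp⟩
    · refine ⟨ℓ, univ, ?_⟩
      ext y
      simpa using of_update_closed univ (fun x hx m _ a => (hact x m a).2 hx) (y := y) (by simp) hx₀

variable (K) in
theorem exists_mem_zeroHyperplaneSums_forall_isHyperplaneUnion [CharZero K] [Nonempty ι] :
    ∃ M ∈ zeroHyperplaneSums K α, ∀ I : Finset (∀ i, α i), ∑ x ∈ I, M x = 0 →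
      IsHyperplaneUnion I := by
  obtain ⟨M, hM, hMI⟩ := Module.Dual.exists_forall_mem_ne_zero_of_forall_exists
    (zeroHyperplaneSums K α) (fun I : {I : Finset (∀ i, α i) // ¬IsHyperplaneUnion I} =>
      sumOver K I.1) fun ⟨I, hI⟩ => by
    by_contra! h
    have hR : RectangleSumsVanish K I := fun x ℓ m hℓm r s => by
      simpa using h _ (rectangleArray_mem_zeroHyperplaneSums hℓm x r s)
    exact hI hR.isHyperplaneUnion
  exact ⟨M, hM, fun I hI => by_contra fun h => hMI ⟨I, h⟩ (by simpa using hI)⟩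

end Arrays

theorem stmt6_general (k : ℕ) (hk : 0 < k) (n : Fin k → ℕ) :
    ∃ M : (∀ i : Fin k, Fin (n i)) → ℚ,
      (∀ (ℓ : Fin k) (r : Fin (n ℓ)),
        ∑ x ∈ Finset.univ.filter (fun x => x ℓ = r), M x = 0) ∧
      ∀ I : Finset (∀ i : Fin k, Fin (n i)), ∑ x ∈ I, M x = 0 →
        ∃ (ℓ : Fin k) (S : Finset (Fin (n ℓ))),
          I = Finset.univ.filter (fun x => x ℓ ∈ S) := by
  have : Nonempty (Fin k) := Fin.pos_iff_nonempty.mp hk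
  obtain ⟨M, hM, hMI⟩ := exists_mem_zeroHyperplaneSums_forall_isHyperplaneUnion
    (α := fun i => Fin (n i)) ℚ
  exact ⟨M, mem_zeroHyperplaneSums.mp hM, hMI⟩

/-- There exists a rational array `M` on `[n_1] × ⋯ × [n_k]` all of whose
coordinate-hyperplane sums vanish, and such that the sum of `M` over a subset `I`
vanishes only if `I` is a union of parallel coordinate hyperplanes `H_ℓ(S)`. -/
theorem stmt6 (k : ℕ) (hk : 0 < k) (n : Fin k → ℕ) (hn : ∀ i, 1 < n i) (hmono : Monotone n) :
    ∃ M : (∀ i : Fin k, Fin (n i)) → ℚ,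
      (∀ (ℓ : Fin k) (r : Fin (n ℓ)),
        ∑ x ∈ Finset.univ.filter (fun x => x ℓ = r), M x = 0) ∧
      ∀ I : Finset (∀ i : Fin k, Fin (n i)), ∑ x ∈ I, M x = 0 →
        ∃ (ℓ : Fin k) (S : Finset (Fin (n ℓ))),
          I = Finset.univ.filter (fun x => x ℓ ∈ S) :=
  stmt6_general k hk n
end

section
/- Let k, q > 1 and 1 < n_1 ≤ ... ≤ n_k be integers. Then there exists a q-tuple of arrays (M_1, ..., M_q), each in ℚ^{n_1 × ... × n_k} with all entries positive integers, such that: (a) for every coordinate hyperplane H_ℓ(r), the sums Σ_{m ∈ H_ℓ(r)} (M_s)_m are equal for all s ∈ {1,...,q}; and (b) whenever non-empty subsets I_1, ..., I_q ⊆ [n_1] × ... × [n_k] satisfy Σ_{m ∈ I_s} (M_s)_m = Σ_{m ∈ I_t} (M_t)_m for all s, t, then I_1 = ... = I_q and this common set equals H_ℓ(S) for some ℓ ∈ {1,...,k} and S ⊆ [n_ℓ]. -/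
/-
For a set `I` of cells let `f` be its `0/1` indicator. The mixed differences
`f(x[i:=a][j:=b]) - f(x[i:=a]) - f(x[j:=b]) + f(x)`, `i ≠ j`, all vanish iff `I = H_ℓ(S)` for
some `ℓ, S`: vanishing mixed differences make each first difference along a coordinate
independent of the base point, and a `0/1`-valued function cannot change along two different
coordinates without some box taking a value outside `{0, 1}`. Each mixed difference is linear in
`I` with values in `[-2, 2]`, so weighting the boxes with distinct powers of `3` gives one
integer array `D` with `∑_{x ∈ I} D x = 0` iff `I = H_ℓ(S)`.

Take `M_s = A·3^{e(x)} + B + s·D` with `e` an enumeration of the cells, `B` so large that the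
last two terms are positive and `A` larger than any of their sums over a set. An equality
`∑_{I_s} M_s = ∑_{I_t} M_t` then splits, by division with remainder by `A`, into equal ternary
digits, forcing `I_s = I_t`, and equal remainders, forcing `∑_{I_s} D = 0` when `s ≠ t`.
-/

open Finset Function

theorem eq_zero_of_sum_pow_mul_eq_zero {b : ℤ} {N : ℕ} {c : Fin N → ℤ} (hc : ∀ i, |c i| < b)
    (h : ∑ i : Fin N, b ^ (i : ℕ) * c i = 0) (i : Fin N) : c i = 0 := by
  induction N with
  | zero => exact i.elim0
  | succ N ih =>
    simp only [Fin.sum_univ_succ, Fin.val_zero, pow_zero, one_mul, Fin.val_succ, pow_succ',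
      mul_assoc, ← Finset.mul_sum] at h
    have hc0 : c 0 = 0 := Int.eq_zero_of_abs_lt_dvd ⟨-_, by linarith⟩ (hc 0)
    have hb : b ≠ 0 := ((abs_nonneg _).trans_lt (hc 0)).ne'
    rw [hc0, zero_add, mul_eq_zero, or_iff_right hb] at h
    cases i using Fin.cases with
    | zero => exact hc0
    | succ i => exact ih (fun i => hc i.succ) h i

section DigitWeight

variable {X : Type*} [Fintype X]

variable (X) in
noncomputable def digitWeight (x : X) : ℤ :=
  3 ^ (Fintype.equivFin X x : ℕ)

theorem digitWeight_pos (x : X) : 0 < digitWeight X x := by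
  unfold digitWeight; positivity

theorem eq_zero_of_sum_digitWeight_mul_eq_zero {c : X → ℤ} (hc : ∀ x, |c x| ≤ 2)
    (h : ∑ x, digitWeight X x * c x = 0) (x : X) : c x = 0 := by
  have := eq_zero_of_sum_pow_mul_eq_zero (b := 3) (c := c ∘ (Fintype.equivFin X).symm)
    (fun i => by have := hc ((Fintype.equivFin X).symm i); simp only [comp_apply]; omega)
    (by rw [← h, ← (Fintype.equivFin X).symm.sum_comp]; simp [digitWeight])
    (Fintype.equivFin X x)
  simpa using this

theorem eq_of_sum_digitWeight_eq [DecidableEq X] {I J : Finset X}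
    (h : ∑ x ∈ I, digitWeight X x = ∑ x ∈ J, digitWeight X x) : I = J := by
  have hc := eq_zero_of_sum_digitWeight_mul_eq_zero
    (c := fun x => (if x ∈ I then 1 else 0) - if x ∈ J then 1 else 0)
    (fun x => by split_ifs <;> norm_num)
    (by simp [mul_sub, Finset.sum_sub_distrib, h])
  ext x
  have := hc x
  split_ifs at this <;> simp_all

end DigitWeight

section DependsOn

variable {ι : Type*} [DecidableEq ι] {α : ι → Type*} {β : Type*} {f : (∀ i, α i) → β}

theorem DependsOn.apply_update {s : Set ι} (hf : DependsOn f s) {j : ι} (hj : j ∉ s)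
    (x : ∀ i, α i) (c : α j) : f (Function.update x j c) = f x :=
  hf fun i hi => update_of_ne (by rintro rfl; exact hj hi) c x

theorem dependsOn_of_forall_update_eq [Finite ι] {s : Set ι}
    (h : ∀ j ∉ s, ∀ x (c : α j), f (update x j c) = f x) : DependsOn f s := by
  classical
  have : Fintype ι := Fintype.ofFinite ι
  intro x y hxy
  suffices ∀ t : Finset ι, (∀ i ∈ t, i ∉ s) → ∀ x : ∀ i, α i, (∀ i ∉ t, x i = y i) → f x = f y from
    this (univ.filter (· ∉ s)) (by simp) x (fun i hi => hxy i (by simpa using hi))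
  intro t
  induction t using Finset.induction_on with
  | empty => exact fun _ x hx => congrArg f (funext fun i => hx i (notMem_empty i))
  | insert a t _ ih =>
    intro hts x hx
    rw [← h a (hts a (mem_insert_self a t)) x (y a)]
    refine ih (fun i hi => hts i (mem_insert_of_mem hi)) _ fun i hi => ?_
    by_cases hia : i = a
    · subst hia; simp
    · rw [update_of_ne hia]; exact hx i (by simp [hia, hi])

end DependsOn

section MixedDiff

variable {ι : Type*} [DecidableEq ι] {α : ι → Type*} {f : (∀ i, α i) → ℤ}

def mixedDiff (f : (∀ i, α i) → ℤ) (i j : ι) (x : ∀ i, α i) (a : α i) (b : α j) : ℤ :=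
  f (update (update x i a) j b) - f (update x i a) - f (update x j b) + f x

theorem mixedDiff_eq_zero_of_dependsOn {ℓ : ι} (hf : DependsOn f {ℓ}) {i j : ι} (hij : i ≠ j)
    (x : ∀ i, α i) (a : α i) (b : α j) : mixedDiff f i j x a b = 0 := by
  unfold mixedDiff
  by_cases hi : i = ℓ
  · subst hi
    rw [hf.apply_update (Ne.symm hij), hf.apply_update (Ne.symm hij)]
    ring
  · rw [update_comm hij, hf.apply_update hi, hf.apply_update hi]
    ring

theorem abs_mixedDiff_le_two (h01 : ∀ x, f x = 0 ∨ f x = 1) (i j : ι) (x : ∀ i, α i)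
    (a : α i) (b : α j) : |mixedDiff f i j x a b| ≤ 2 := by
  have := h01 (update (update x i a) j b); have := h01 (update x i a)
  have := h01 (update x j b); have := h01 x
  rw [mixedDiff, abs_le]; omega

variable (hf : ∀ i j, i ≠ j → ∀ x a b, mixedDiff f i j x a b = 0)
include hf

theorem sub_apply_update_eq_of_mixedDiff_eq_zero [Finite ι] (i : ι) (a b : α i) (x y : ∀ i, α i) :
    f (update x i b) - f (update x i a) = f (update y i b) - f (update y i a) := by
  refine DependsOn.empty (f := fun x => f (update x i b) - f (update x i a))
    (dependsOn_of_forall_update_eq fun j _ x c => ?_) x y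
  by_cases hji : j = i
  · subst hji
    simp only [update_idem]
  · have hb := hf i j (Ne.symm hji) x b c
    have ha := hf i j (Ne.symm hji) x a c
    unfold mixedDiff at ha hb
    rw [update_comm hji, update_comm hji]
    linarith

theorem exists_dependsOn_singleton_of_mixedDiff_eq_zero [Finite ι] [Nonempty ι]
    (h01 : ∀ x, f x = 0 ∨ f x = 1) : ∃ ℓ, DependsOn f {ℓ} := by
  by_cases hconst : ∀ i x (a : α i), f (update x i a) = f x
  · exact ⟨Classical.arbitrary ι, dependsOn_of_forall_update_eq fun j _ => hconst j⟩
  push Not at hconst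
  obtain ⟨ℓ, x₀, a, ha⟩ := hconst
  refine ⟨ℓ, dependsOn_of_forall_update_eq fun j (hj : j ≠ ℓ) x c => ?_⟩
  by_contra hc
  -- On the box moving `ℓ` from `x₀ ℓ` to `a` and `j` from `x j` to `c`, both `ℓ`-differences
  -- equal the nonzero `f (update x₀ ℓ a) - f x₀` and one `j`-difference is nonzero too.
  have hℓ := sub_apply_update_eq_of_mixedDiff_eq_zero hf ℓ (x₀ ℓ) a x₀ x
  have hℓ' := sub_apply_update_eq_of_mixedDiff_eq_zero hf ℓ (x₀ ℓ) a x₀ (update x j c)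
  have hj' := sub_apply_update_eq_of_mixedDiff_eq_zero hf j (x j) c x (update x ℓ (x₀ ℓ))
  rw [update_eq_self] at hℓ hℓ' hj'
  rw [update_comm (Ne.symm hj), update_comm (Ne.symm hj), update_eq_self] at hj'
  have := h01 (update x ℓ (x₀ ℓ)); have := h01 (update x ℓ a)
  have := h01 (update (update x j c) ℓ (x₀ ℓ)); have := h01 (update (update x j c) ℓ a)
  omega

end MixedDiff

section BoxEncoding

variable {ι : Type*} [Fintype ι] [DecidableEq ι] {α : ι → Type*} [∀ i, Fintype (α i)]
  [∀ i, DecidableEq (α i)]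

abbrev CoordinateBox (α : ι → Type*) : Type _ :=
  Σ ij : {p : ι × ι // p.1 ≠ p.2}, (∀ i, α i) × α ij.1.1 × α ij.1.2

def boxDiff (f : (∀ i, α i) → ℤ) (θ : CoordinateBox α) : ℤ :=
  mixedDiff f θ.1.1.1 θ.1.1.2 θ.2.1 θ.2.2.1 θ.2.2.2

noncomputable def boxEncoding (z : ∀ i, α i) : ℤ :=
  ∑ θ : CoordinateBox α,
    digitWeight (CoordinateBox α) θ * boxDiff (fun x => if x = z then 1 else 0) θ

theorem sum_boxEncoding (I : Finset (∀ i, α i)) :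
    ∑ z ∈ I, boxEncoding z =
      ∑ θ : CoordinateBox α,
        digitWeight (CoordinateBox α) θ * boxDiff (fun x => if x ∈ I then 1 else 0) θ := by
  simp only [boxEncoding]
  rw [Finset.sum_comm]
  refine Finset.sum_congr rfl fun θ _ => ?_
  simp [← Finset.mul_sum, boxDiff, mixedDiff, Finset.sum_add_distrib, Finset.sum_sub_distrib]

theorem dependsOn_indicator_singleton_iff {ℓ : ι} {I : Finset (∀ i, α i)} :
    DependsOn (fun x => if x ∈ I then (1 : ℤ) else 0) {ℓ} ↔
      ∃ S : Finset (α ℓ), I = univ.filter fun x => x ℓ ∈ S := by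
  constructor
  · intro hI
    refine ⟨I.image (· ℓ), Finset.ext fun x => ⟨fun hx => by simpa using ⟨x, hx, rfl⟩, ?_⟩⟩
    simp only [mem_filter, mem_univ, true_and, mem_image]
    rintro ⟨y, hy, hyx⟩
    have := hI (x := x) (y := y) (by simpa using hyx.symm)
    simp_all
  · rintro ⟨S, rfl⟩ x y hxy
    simp [hxy ℓ rfl]

theorem sum_boxEncoding_eq_zero_iff [Nonempty ι] {I : Finset (∀ i, α i)} :
    ∑ z ∈ I, boxEncoding z = 0 ↔
      ∃ (ℓ : ι) (S : Finset (α ℓ)), I = univ.filter fun x => x ℓ ∈ S := by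
  simp only [← dependsOn_indicator_singleton_iff, sum_boxEncoding]
  set f : (∀ i, α i) → ℤ := fun x => if x ∈ I then 1 else 0
  have h01 : ∀ x, f x = 0 ∨ f x = 1 := fun x => by by_cases hx : x ∈ I <;> simp [f, hx]
  constructor
  · intro h
    have hθ := eq_zero_of_sum_digitWeight_mul_eq_zero
      (fun θ => abs_mixedDiff_le_two h01 _ _ _ _ _) h
    exact exists_dependsOn_singleton_of_mixedDiff_eq_zero
      (fun i j hij x a b => hθ ⟨⟨(i, j), hij⟩, x, a, b⟩) h01
  · rintro ⟨ℓ, hf⟩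
    exact Finset.sum_eq_zero fun θ _ => by
      rw [boxDiff, mixedDiff_eq_zero_of_dependsOn hf θ.1.2, mul_zero]

end BoxEncoding

section PerturbedArray

variable {X : Type*} [Fintype X] (D : X → ℤ) (q : ℕ)

def arrayOffset : ℤ := 1 + q * ∑ x, |D x|

def arrayScale : ℤ := 1 + 2 * arrayOffset D q * Fintype.card X

noncomputable def perturbedArray (s : ℕ) (x : X) : ℤ :=
  arrayScale D q * digitWeight X x + (arrayOffset D q + s * D x)

variable {D q} {s t : ℕ}

variable (D q) in
theorem arrayOffset_pos : 0 < arrayOffset D q := by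
  unfold arrayOffset; positivity

variable (D q) in
theorem arrayScale_pos : 0 < arrayScale D q := by
  unfold arrayScale; have := arrayOffset_pos D q; positivity

variable (D) in
theorem abs_mul_lt_arrayOffset (hs : s < q) (x : X) : |s * D x| < arrayOffset D q :=
  calc |s * D x| = s * |D x| := by rw [abs_mul, Nat.abs_cast]
    _ ≤ q * ∑ y, |D y| := by
      gcongr
      exact single_le_sum (fun y _ => abs_nonneg (D y)) (mem_univ x)
    _ < arrayOffset D q := lt_one_add _

theorem perturbedArray_pos (hs : s < q) (x : X) : 0 < perturbedArray D q s x := by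
  have := (abs_lt.1 (abs_mul_lt_arrayOffset D hs x)).1
  have := mul_pos (arrayScale_pos D q) (digitWeight_pos x)
  rw [perturbedArray]
  linarith

variable (D) in
theorem sum_arrayOffset_add_mul_mem_Ico (hs : s < q) (I : Finset X) :
    ∑ x ∈ I, (arrayOffset D q + s * D x) ∈ Set.Ico 0 (arrayScale D q) := by
  have hlt : ∀ x, |s * D x| < arrayOffset D q := abs_mul_lt_arrayOffset D hs
  constructor
  · exact sum_nonneg fun x _ => by linarith [(abs_lt.1 (hlt x)).1]
  · calc ∑ x ∈ I, (arrayOffset D q + s * D x) ≤ ∑ x ∈ I, 2 * arrayOffset D q :=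
          sum_le_sum fun x _ => by linarith [(abs_lt.1 (hlt x)).2]
      _ = #I * (2 * arrayOffset D q) := by rw [sum_const, nsmul_eq_mul]
      _ ≤ Fintype.card X * (2 * arrayOffset D q) := by
          gcongr
          · linarith [arrayOffset_pos D q]
          · exact card_le_univ I
      _ < arrayScale D q := by rw [arrayScale]; linarith

theorem sum_perturbedArray (I : Finset X) :
    ∑ x ∈ I, perturbedArray D q s x =
      ∑ x ∈ I, (arrayOffset D q + s * D x) + arrayScale D q * ∑ x ∈ I, digitWeight X x := by
  rw [mul_sum, ← sum_add_distrib]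
  exact sum_congr rfl fun x _ => add_comm _ _

theorem sum_perturbedArray_ediv_emod (hs : s < q) (I : Finset X) :
    (∑ x ∈ I, perturbedArray D q s x) / arrayScale D q = ∑ x ∈ I, digitWeight X x ∧
      (∑ x ∈ I, perturbedArray D q s x) % arrayScale D q =
        ∑ x ∈ I, (arrayOffset D q + s * D x) :=
  (Int.ediv_emod_unique (arrayScale_pos D q)).2
    ⟨(sum_perturbedArray I).symm, sum_arrayOffset_add_mul_mem_Ico D hs I⟩

theorem eq_of_sum_perturbedArray_eq [DecidableEq X] (hs : s < q) (ht : t < q) {I J : Finset X}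
    (h : ∑ x ∈ I, perturbedArray D q s x = ∑ x ∈ J, perturbedArray D q t x) : I = J := by
  apply eq_of_sum_digitWeight_eq
  rw [← (sum_perturbedArray_ediv_emod hs I).1, ← (sum_perturbedArray_ediv_emod ht J).1, h]

theorem sum_eq_zero_of_sum_perturbedArray_eq (hs : s < q) (ht : t < q) (hst : s ≠ t)
    {I : Finset X} (h : ∑ x ∈ I, perturbedArray D q s x = ∑ x ∈ I, perturbedArray D q t x) :
    ∑ x ∈ I, D x = 0 := by
  have hmod := (sum_perturbedArray_ediv_emod hs I).2.symm.trans
    (h ▸ (sum_perturbedArray_ediv_emod ht I).2)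
  simp only [sum_add_distrib, ← mul_sum, add_right_inj] at hmod
  exact (mul_eq_mul_right_iff.1 hmod).resolve_left (by exact_mod_cast hst)

theorem sum_perturbedArray_eq_of_sum_eq_zero {H : Finset X} (hH : ∑ x ∈ H, D x = 0) (s t : ℕ) :
    ∑ x ∈ H, perturbedArray D q s x = ∑ x ∈ H, perturbedArray D q t x := by
  simp only [sum_perturbedArray, sum_add_distrib, ← mul_sum, hH, mul_zero]

end PerturbedArray

theorem stmt7_general (k q : ℕ) (hk : 1 < k) (hq : 1 < q)
    (n : Fin k → ℕ) :
    ∃ M : Fin q → (∀ i : Fin k, Fin (n i)) → ℚ,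
      (∀ (s : Fin q) (x : ∀ i : Fin k, Fin (n i)), ∃ c : ℕ, 0 < c ∧ M s x = (c : ℚ)) ∧
      (∀ (ℓ : Fin k) (r : Fin (n ℓ)) (s t : Fin q),
        ∑ x ∈ Finset.univ.filter (fun x => x ℓ = r), M s x =
          ∑ x ∈ Finset.univ.filter (fun x => x ℓ = r), M t x) ∧
      (∀ I : Fin q → Finset (∀ i : Fin k, Fin (n i)), (∀ s, (I s).Nonempty) →
        (∀ s t : Fin q, ∑ x ∈ I s, M s x = ∑ x ∈ I t, M t x) →
        ∃ (ℓ : Fin k) (S : Finset (Fin (n ℓ))),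
          ∀ s, I s = Finset.univ.filter (fun x => x ℓ ∈ S)) := by
  have : Nonempty (Fin k) := ⟨⟨0, by omega⟩⟩
  let D := boxEncoding (α := fun i => Fin (n i))
  refine ⟨fun s x => perturbedArray D q s x, fun s x => ?_, fun ℓ r s t => ?_, fun I _ hI => ?_⟩
  · have hpos := perturbedArray_pos (D := D) s.isLt x
    obtain ⟨c, hc⟩ := Int.eq_ofNat_of_zero_le hpos.le
    exact ⟨c, by omega, by simp [hc]⟩
  · have hH : ∑ x ∈ univ.filter (fun x => x ℓ = r), D x = 0 :=
      sum_boxEncoding_eq_zero_iff.2 ⟨ℓ, {r}, by simp⟩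
    simp only [← Int.cast_sum, sum_perturbedArray_eq_of_sum_eq_zero hH s t]
  · replace hI : ∀ s t : Fin q, ∑ x ∈ I s, perturbedArray D q s x =
        ∑ x ∈ I t, perturbedArray D q t x := fun s t => by
      simpa only [← Int.cast_sum, Int.cast_inj] using hI s t
    let s₀ : Fin q := ⟨0, by omega⟩
    let s₁ : Fin q := ⟨1, hq⟩
    have hI₀ : ∀ s, I s = I s₀ := fun s => eq_of_sum_perturbedArray_eq s.isLt s₀.isLt (hI s s₀)
    have hD : ∑ x ∈ I s₀, D x = 0 := by
      refine sum_eq_zero_of_sum_perturbedArray_eq s₀.isLt s₁.isLt zero_ne_one ?_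
      rw [hI s₀ s₁, hI₀ s₁]
    obtain ⟨ℓ, S, hS⟩ := sum_boxEncoding_eq_zero_iff.1 hD
    exact ⟨ℓ, S, fun s => (hI₀ s).trans hS⟩

/-- There exists a `q`-tuple of arrays `(M_1, …, M_q)` with positive integer entries such
that all coordinate-hyperplane sums agree across the tuple, and whenever non-empty subsets
`I_1, …, I_q` have equal sums `Σ_{m ∈ I_s} (M_s)_m` across `s`, all the `I_s` coincide and
are a union of parallel coordinate hyperplanes `H_ℓ(S)`. -/
theorem stmt7 (k q : ℕ) (hk : 1 < k) (hq : 1 < q)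
    (n : Fin k → ℕ) (hn : ∀ i, 1 < n i) (hmono : Monotone n) :
    ∃ M : Fin q → (∀ i : Fin k, Fin (n i)) → ℚ,
      (∀ (s : Fin q) (x : ∀ i : Fin k, Fin (n i)), ∃ c : ℕ, 0 < c ∧ M s x = (c : ℚ)) ∧
      (∀ (ℓ : Fin k) (r : Fin (n ℓ)) (s t : Fin q),
        ∑ x ∈ Finset.univ.filter (fun x => x ℓ = r), M s x =
          ∑ x ∈ Finset.univ.filter (fun x => x ℓ = r), M t x) ∧
      (∀ I : Fin q → Finset (∀ i : Fin k, Fin (n i)), (∀ s, (I s).Nonempty) →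
        (∀ s t : Fin q, ∑ x ∈ I s, M s x = ∑ x ∈ I t, M t x) →
        ∃ (ℓ : Fin k) (S : Finset (Fin (n ℓ))),
          ∀ s, I s = Finset.univ.filter (fun x => x ℓ ∈ S)) :=
  stmt7_general k q hk hq n
end

section
/- Let D be a Krull domain with quotient field K admitting a prime element π with normalized valuation v, and let I be a finite set. Let f ∈ Int(D) be of the form f = (∏_{i∈I} f_i)/π^e with each f_i ∈ D[X] irreducible over K and e ∈ ℕ, and suppose min{v_Q(f(a)) : a ∈ D} = 0 for every height-one prime Q of D. If f = g_1 ⋯ g_m is a decomposition into non-units of Int(D), then, up to multiplication by units of D, each g_j = (∏_{i ∈ I_j} f_i)/π^{e_j}, where the I_j are non-empty and partition I and Σ_j e_j = e. -/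
open Polynomial

/-- The ring of integer-valued polynomials `Int(D) ⊆ K[X]`. -/
noncomputable def IntPolySubring (D K : Type*) [CommRing D] [CommRing K] [Algebra D K] :
    Subring (Polynomial K) :=
  ⨅ a : D, Subring.comap (Polynomial.evalRingHom (algebraMap D K a)) (algebraMap D K).range

/-!
In `K[X]` the `fᵢ` are primes, so unique factorization distributes them among the factors:
`g j = d j • ∏_{i ∈ I j} fᵢ` with constants `d j ∈ K` satisfying `∏ d j = π⁻ᵉ`. For each
height-one prime `Q` some value `f(a)` is a `Q`-unit, hence so is every `g j (a)`, and therefore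
`(d j)⁻¹ = (∏_{i ∈ I j} fᵢ)(a) / g j (a)` lies in `D_Q`. As `D` is the intersection of these
localizations, `(d j)⁻¹ ∈ D`; these elements multiply to `πᵉ`, so, `π` being prime, each is a
unit times `π ^ e j` with `Σ e j = e`. An empty `I j` would make `g j` a unit of `D`.
-/

section PrimeFactors

variable {α ι : Type*} [CommMonoidWithZero α] [IsCancelMulZero α] {F : ι → α}

theorem exists_subset_associated_prod_of_dvd_prod (hF : ∀ i, Prime (F i)) {s : Finset ι} {p : α}
    (h : p ∣ ∏ i ∈ s, F i) : ∃ t ⊆ s, Associated p (∏ i ∈ t, F i) := by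
  classical
  induction s using Finset.induction_on generalizing p with
  | empty =>
    exact ⟨∅, subset_rfl, by simpa [associated_one_iff_isUnit, isUnit_iff_dvd_one] using h⟩
  | insert a s ha ih =>
    rw [Finset.prod_insert ha] at h
    by_cases hap : F a ∣ p
    · obtain ⟨p', rfl⟩ := hap
      obtain ⟨t, hts, ht⟩ := ih ((mul_dvd_mul_iff_left (hF a).ne_zero).mp h)
      refine ⟨insert a t, Finset.insert_subset_insert a hts, ?_⟩
      rw [Finset.prod_insert fun hat => ha (hts hat)]
      exact ht.mul_left (F a)
    · obtain ⟨x, hx⟩ := h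
      obtain ⟨y, rfl⟩ := ((hF a).dvd_or_dvd ⟨_, hx.symm⟩).resolve_left hap
      have hp : p ∣ ∏ i ∈ s, F i :=
        ⟨y, mul_left_cancel₀ (hF a).ne_zero (hx.trans (mul_left_comm _ _ _))⟩
      obtain ⟨t, hts, ht⟩ := ih hp
      exact ⟨t, hts.trans (Finset.subset_insert a s), ht⟩

theorem exists_associated_pow_of_prod_associated_pow {π : α} (hπ : Prime π) :
    ∀ {m : ℕ} (c : Fin m → α) {e : ℕ}, Associated (∏ j, c j) (π ^ e) →
      ∃ k : Fin m → ℕ, (∀ j, Associated (c j) (π ^ k j)) ∧ ∑ j, k j = e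
  | 0, c, e, h => by
    refine ⟨Fin.elim0, fun j => j.elim0, ?_⟩
    have hunit : IsUnit (π ^ e) := by simpa [associated_one_iff_isUnit] using h.symm
    by_contra he
    exact hπ.not_isUnit ((isUnit_pow_iff (Ne.symm he)).mp hunit)
  | m + 1, c, e, h => by
    rw [Fin.prod_univ_succ] at h
    obtain ⟨k₀, hk₀e, hc₀⟩ := (dvd_prime_pow hπ e).mp ((dvd_mul_right _ _).trans h.dvd)
    have hrest : Associated (∏ j : Fin m, c j.succ) (π ^ (e - k₀)) := by
      refine Associated.of_mul_left ?_ hc₀ (hc₀.ne_zero_iff.mpr (pow_ne_zero k₀ hπ.ne_zero))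
      rwa [pow_mul_pow_sub π hk₀e]
    obtain ⟨k, hk, hsum⟩ :=
      exists_associated_pow_of_prod_associated_pow hπ (fun j => c j.succ) hrest
    refine ⟨Fin.cons k₀ k, Fin.cases hc₀ hk, ?_⟩
    rw [Fin.sum_univ_succ]
    simp only [Fin.cons_zero, Fin.cons_succ, hsum]
    omega

variable [Nontrivial α]

theorem exists_subset_associated_of_mul_associated_prod [DecidableEq ι] (hF : ∀ i, Prime (F i))
    {s : Finset ι} {p q : α} (h : Associated (p * q) (∏ i ∈ s, F i)) :
    ∃ t ⊆ s, Associated p (∏ i ∈ t, F i) ∧ Associated q (∏ i ∈ s \ t, F i) := by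
  obtain ⟨t, hts, hp⟩ :=
    exists_subset_associated_prod_of_dvd_prod hF ((dvd_mul_right p q).trans h.dvd)
  refine ⟨t, hts, hp, ?_⟩
  rw [← Finset.prod_sdiff hts, mul_comm (∏ i ∈ s \ t, F i)] at h
  exact (hp.symm.mul_right q).trans h |>.of_mul_left (Associated.refl _)
    (Finset.prod_ne_zero_iff.mpr fun i _ => (hF i).ne_zero)

theorem exists_partition_associated_of_prod_associated (hF : ∀ i, Prime (F i)) :
    ∀ {m : ℕ} (g : Fin m → α) {s : Finset ι}, Associated (∏ j, g j) (∏ i ∈ s, F i) →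
      ∃ t : Fin m → Finset ι, (∀ j, t j ⊆ s) ∧ (∀ i ∈ s, ∃! j, i ∈ t j) ∧
        ∀ j, Associated (g j) (∏ i ∈ t j, F i)
  | 0, g, s, h => by
    refine ⟨Fin.elim0, fun j => j.elim0, fun i hi => ?_, fun j => j.elim0⟩
    have hunit : IsUnit (∏ i ∈ s, F i) := by
      simpa [associated_one_iff_isUnit] using h.symm
    exact ((hF i).not_isUnit (isUnit_of_dvd_unit (Finset.dvd_prod_of_mem F hi) hunit)).elim
  | m + 1, g, s, h => by
    classical
    rw [Fin.prod_univ_succ] at h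
    obtain ⟨t₀, ht₀, hg₀, hrest⟩ := exists_subset_associated_of_mul_associated_prod hF h
    obtain ⟨t, ht, hpart, hg⟩ :=
      exists_partition_associated_of_prod_associated hF (fun j => g j.succ) hrest
    refine ⟨Fin.cons t₀ t, Fin.cases ht₀ fun j => (ht j).trans Finset.sdiff_subset,
      fun i hi => ?_, Fin.cases hg₀ hg⟩
    by_cases hi₀ : i ∈ t₀
    · refine ⟨0, hi₀, Fin.cases (fun _ => rfl) fun j hj => ?_⟩
      exact absurd hi₀ (Finset.mem_sdiff.mp (ht j hj)).2
    · obtain ⟨j, hj, huniq⟩ := hpart i (Finset.mem_sdiff.mpr ⟨hi, hi₀⟩)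
      refine ⟨j.succ, hj, Fin.cases (fun h₀ => absurd h₀ hi₀) fun k hk => ?_⟩
      rw [huniq k hk]

end PrimeFactors

theorem Finset.prod_prod_eq_prod_of_existsUnique {ι κ M : Type*} [Fintype ι] [Fintype κ]
    [CommMonoid M] {t : κ → Finset ι} (h : ∀ i, ∃! j, i ∈ t j) (F : ι → M) :
    ∏ j, ∏ i ∈ t j, F i = ∏ i, F i := by
  classical
  rw [← Finset.prod_biUnion fun j _ j' _ hne =>
    Finset.disjoint_left.mpr fun i hi hi' => hne ((h i).unique hi hi')]
  congr
  ext i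
  simpa using (h i).exists

theorem Polynomial.exists_eq_C_mul_of_associated {K : Type*} [Field K] {p q : K[X]}
    (h : Associated p q) : ∃ c ≠ (0 : K), p = C c * q := by
  obtain ⟨u, hu⟩ := h.symm
  obtain ⟨c, hc, hcu⟩ := Polynomial.isUnit_iff.mp u.isUnit
  exact ⟨c, hc.ne_zero, by rw [← hu, hcu, mul_comm]⟩

theorem Polynomial.exists_partition_eq_C_mul_prod {K ι : Type*} [Field K] [Fintype ι]
    {F : ι → K[X]} (hF : ∀ i, Irreducible (F i)) {m : ℕ} {g : Fin m → K[X]} {c : K} (hc : c ≠ 0)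
    (h : (∏ j, g j) * C c = ∏ i, F i) :
    ∃ (t : Fin m → Finset ι) (d : Fin m → K), (∀ i, ∃! j, i ∈ t j) ∧ (∀ j, d j ≠ 0) ∧
      (∀ j, g j = C (d j) * ∏ i ∈ t j, F i) ∧ (∏ j, d j) * c = 1 := by
  obtain ⟨t, -, hpart, hgt⟩ := exists_partition_associated_of_prod_associated
    (fun i => (hF i).prime) g ⟨(isUnit_C.mpr hc.isUnit).unit, h⟩
  choose d hd hgd using fun j => exists_eq_C_mul_of_associated (hgt j)
  have hpart' : ∀ i, ∃! j, i ∈ t j := fun i => hpart i (Finset.mem_univ i)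
  have hF0 : ∏ i, F i ≠ 0 := Finset.prod_ne_zero_iff.mpr fun i _ => (hF i).ne_zero
  refine ⟨t, d, hpart', hd, hgd, C_injective (mul_right_cancel₀ hF0 ?_)⟩
  calc C ((∏ j, d j) * c) * ∏ i, F i = (∏ j, C (d j) * ∏ i ∈ t j, F i) * C c := by
        rw [Finset.prod_mul_distrib, Finset.prod_prod_eq_prod_of_existsUnique hpart', C_mul,
          map_prod]
        ring
    _ = C 1 * ∏ i, F i := by simp_rw [← hgd]; rw [h, C_1, one_mul]

section IntPolySubring

variable {D K : Type*} [CommRing D] [CommRing K] [Algebra D K]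

theorem mem_intPolySubring_iff {p : K[X]} :
    p ∈ IntPolySubring D K ↔ ∀ a : D, ∃ d : D, algebraMap D K d = p.eval (algebraMap D K a) := by
  simp [IntPolySubring, Subring.mem_iInf, Subring.mem_comap, RingHom.mem_range]

theorem C_algebraMap_mem_intPolySubring (d : D) : C (algebraMap D K d) ∈ IntPolySubring D K :=
  mem_intPolySubring_iff.mpr fun _ => ⟨d, eval_C.symm⟩

theorem isUnit_of_coe_eq_C_of_mul_algebraMap_eq_one (hφ : Function.Injective (algebraMap D K))
    {g : IntPolySubring D K} {d : K} {c : D} (hg : (g : K[X]) = C d)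
    (hdc : d * algebraMap D K c = 1) : IsUnit g := by
  obtain ⟨r, hr⟩ := mem_intPolySubring_iff.mp g.2 0
  rw [hg, eval_C] at hr
  have hrc : r * c = 1 := hφ (by rw [map_mul, hr, hdc, map_one])
  refine IsUnit.of_mul_eq_one ⟨_, C_algebraMap_mem_intPolySubring c⟩ (Subtype.ext ?_)
  simp [hg, ← hr, ← map_mul, hrc]

theorem exists_eval_notMem_of_eval_prod_notMem (hφ : Function.Injective (algebraMap D K))
    {Q : Ideal D} [Q.IsPrime] {κ : Type*} {s : Finset κ} {g : κ → IntPolySubring D K} {a d : D}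
    (h : (∏ j ∈ s, (g j : K[X])).eval (algebraMap D K a) = algebraMap D K d) (hd : d ∉ Q)
    {j : κ} (hj : j ∈ s) :
    ∃ r : D, (g j : K[X]).eval (algebraMap D K a) = algebraMap D K r ∧ r ∉ Q := by
  choose r hr using fun j => mem_intPolySubring_iff.mp (g j).2 a
  have hdr : d = ∏ j ∈ s, r j := hφ (by simp [← h, eval_prod, hr])
  exact ⟨r j, (hr j).symm, fun hrj => hd (hdr ▸ Ideal.IsPrime.prod_mem_iff.mpr ⟨j, hj, hrj⟩)⟩

end IntPolySubring

theorem IsKrullDomain.exists_mul_algebraMap_eq_one {D : Type*} [CommRing D] [IsDomain D]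
    (hD : IsKrullDomain D) {d : FractionRing D} (hd : d ≠ 0)
    (h : ∀ Q : Ideal D, HeightOnePrime D Q → ∃ a r : D, r ∉ Q ∧
      d * algebraMap D (FractionRing D) a = algebraMap D (FractionRing D) r) :
    ∃ c : D, d * algebraMap D (FractionRing D) c = 1 := by
  obtain ⟨c, hc⟩ := hD.2.2 d⁻¹ fun Q hQ => by
    obtain ⟨a, r, hrQ, hr⟩ := h Q hQ
    exact ⟨a, r, hrQ, by rw [← hr, inv_mul_cancel_left₀ hd]⟩
  exact ⟨c, by rw [← hc, mul_inv_cancel₀ hd]⟩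

theorem IsKrullDomain.exists_mul_algebraMap_eq_one_of_coe_eq_C_mul {D : Type*} [CommRing D]
    [IsDomain D] (hD : IsKrullDomain D) {κ : Type*} {s : Finset κ}
    {g : κ → IntPolySubring D (FractionRing D)}
    (hmin : ∀ Q : Ideal D, HeightOnePrime D Q → ∃ a r : D,
      (∏ j ∈ s, (g j : (FractionRing D)[X])).eval (algebraMap D (FractionRing D) a) =
        algebraMap D (FractionRing D) r ∧ r ∉ Q)
    {j : κ} (hj : j ∈ s) {d : FractionRing D} (hd : d ≠ 0) {p : D[X]}
    (hg : (g j : (FractionRing D)[X]) = C d * p.map (algebraMap D (FractionRing D))) :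
    ∃ c : D, d * algebraMap D (FractionRing D) c = 1 := by
  refine hD.exists_mul_algebraMap_eq_one hd fun Q hQ => ?_
  have := hQ.1
  obtain ⟨a, r, hfa, hrQ⟩ := hmin Q hQ
  obtain ⟨b, hb, hbQ⟩ := exists_eval_notMem_of_eval_prod_notMem
    (IsFractionRing.injective D (FractionRing D)) hfa hrQ hj
  refine ⟨p.eval a, b, hbQ, ?_⟩
  rw [← hb, hg, eval_mul, eval_C, eval_map, eval₂_hom]

theorem stmt9_general (D : Type*) [CommRing D] [IsDomain D] (hD : IsKrullDomain D)
    (π : D) (hπ : Prime π)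
    (ι : Type*) [Fintype ι] (fi : ι → Polynomial D)
    (hirr : ∀ i, Irreducible ((fi i).map (algebraMap D (FractionRing D))))
    (e : ℕ) (f : Polynomial (FractionRing D))
    (hf : f * C ((algebraMap D (FractionRing D) π) ^ e) =
      ∏ i, (fi i).map (algebraMap D (FractionRing D)))
    (hmin : ∀ Q : Ideal D, HeightOnePrime D Q → ∃ (a d : D),
      f.eval (algebraMap D (FractionRing D) a) = algebraMap D (FractionRing D) d ∧ d ∉ Q)
    (m : ℕ) (g : Fin m → IntPolySubring D (FractionRing D))
    (hnonunit : ∀ j, ¬ IsUnit (g j))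
    (hprod : (∏ j, (g j : Polynomial (FractionRing D))) = f) :
    ∃ (I' : Fin m → Finset ι) (e' : Fin m → ℕ) (u : Fin m → Dˣ),
      (∀ j, (I' j).Nonempty) ∧
      (∀ i : ι, ∃! j : Fin m, i ∈ I' j) ∧
      (∑ j, e' j = e) ∧
      ∀ j, (g j : Polynomial (FractionRing D)) * C ((algebraMap D (FractionRing D) π) ^ e' j) =
        C (algebraMap D (FractionRing D) (u j : D)) *
          ∏ i ∈ I' j, (fi i).map (algebraMap D (FractionRing D)) := by
  set φ := algebraMap D (FractionRing D)
  have hφ : Function.Injective φ := IsFractionRing.injective D _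
  have hπe : φ π ^ e ≠ 0 := pow_ne_zero e ((map_ne_zero_iff φ hφ).mpr hπ.ne_zero)
  obtain ⟨t, d, hpart, hd, hgd, hdprod⟩ :=
    exists_partition_eq_C_mul_prod hirr hπe (by rwa [hprod])
  choose c hc using fun j => hD.exists_mul_algebraMap_eq_one_of_coe_eq_C_mul
    (by rwa [hprod]) (Finset.mem_univ j) (hd j) (by rw [hgd j, Polynomial.map_prod])
  have hcprod : ∏ j, c j = π ^ e := hφ <| mul_left_cancel₀ (left_ne_zero_of_mul_eq_one hdprod) <| by
    rw [map_pow, hdprod, map_prod, ← Finset.prod_mul_distrib]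
    exact Finset.prod_eq_one fun j _ => hc j
  obtain ⟨k, hk, hksum⟩ := exists_associated_pow_of_prod_associated_pow hπ c (.of_eq hcprod)
  choose u hu using hk
  refine ⟨t, k, u, fun j => ?_, hpart, hksum, fun j => ?_⟩
  · by_contra hempty
    rw [Finset.not_nonempty_iff_eq_empty] at hempty
    refine hnonunit j (isUnit_of_coe_eq_C_of_mul_algebraMap_eq_one hφ ?_ (hc j))
    rw [hgd j, hempty, Finset.prod_empty, mul_one]
  · rw [hgd j, mul_right_comm, ← C_mul, ← map_pow, ← hu j, map_mul φ, ← mul_assoc, hc j, one_mul]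

/-- Factorization structure in `Int(D)` for a Krull domain `D` with prime element `π`:
if `f = (∏_{i∈I} f_i)/π^e ∈ Int(D)` with each `f_i ∈ D[X]` irreducible over `K`, and
`min {v_Q(f(a)) : a ∈ D} = 0` for every height-one prime `Q` (i.e. some value `f(a) ∈ D`
lies outside `Q`), then in any decomposition `f = g_1 ⋯ g_m` into non-units of `Int(D)`,
each `g_j` is, up to a unit of `D`, of the form `(∏_{i∈I_j} f_i)/π^{e_j}` where the `I_j`
are non-empty and partition `I` and `Σ_j e_j = e`. -/
theorem stmt9 (D : Type*) [CommRing D] [IsDomain D] (hD : IsKrullDomain D)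
    (π : D) (hπ : Prime π)
    (ι : Type*) [Fintype ι] (fi : ι → Polynomial D)
    (hirr : ∀ i, Irreducible ((fi i).map (algebraMap D (FractionRing D))))
    (e : ℕ) (f : Polynomial (FractionRing D))
    (hf : f * C ((algebraMap D (FractionRing D) π) ^ e) =
      ∏ i, (fi i).map (algebraMap D (FractionRing D)))
    (hfint : f ∈ IntPolySubring D (FractionRing D))
    (hmin : ∀ Q : Ideal D, HeightOnePrime D Q → ∃ (a d : D),
      f.eval (algebraMap D (FractionRing D) a) = algebraMap D (FractionRing D) d ∧ d ∉ Q)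
    (m : ℕ) (g : Fin m → IntPolySubring D (FractionRing D))
    (hnonunit : ∀ j, ¬ IsUnit (g j))
    (hprod : (∏ j, (g j : Polynomial (FractionRing D))) = f) :
    ∃ (I' : Fin m → Finset ι) (e' : Fin m → ℕ) (u : Fin m → Dˣ),
      (∀ j, (I' j).Nonempty) ∧
      (∀ i : ι, ∃! j : Fin m, i ∈ I' j) ∧
      (∑ j, e' j = e) ∧
      ∀ j, (g j : Polynomial (FractionRing D)) * C ((algebraMap D (FractionRing D) π) ^ e' j) =
        C (algebraMap D (FractionRing D) (u j : D)) *
          ∏ i ∈ I' j, (fi i).map (algebraMap D (FractionRing D)) :=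
  stmt9_general D hD π hπ ι fi hirr e f hf hmin m g hnonunit hprod
end

section
/- Let D be a Krull domain with a prime element π such that D/πD is finite, with normalized valuation v at πD. Fix n ≥ 2 and a residue class R = r + πD of D modulo πD. Then there exist infinitely many pairwise non-associated (over K) polynomials F ∈ D[X] of degree n, irreducible over the quotient field K, such that min{v(F(a)) : a ∈ R} = n and v(F(a)) = 0 for all a ∈ D \ R. -/
/-! The polynomials `F_d = (X - r)^n + π^(n+1) (1 + π d)`, `d ∈ D`, work. Substituting
`X = π Y + r` turns `F_d` into `π^n (Y^n + π (1 + π d))`, which is Eisenstein at `π`; since a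
Krull domain is integrally closed, Gauss's lemma makes `F_d` irreducible over `K`. For
`a = r + π t` we get `F_d(a) = π^n (t^n + π (1 + π d))`, so `π^n ∣ F_d(a)` (and `π^(n+1) ∤ F_d(a)`
for `t = 1`); this bounds `v(F_d(a))` because `v` is the `π`-adic multiplicity, which is finite
as `D_(π)` is a discrete valuation ring. For `a ∉ r + πD` the summand `(a - r)^n` is prime to `π`.
Distinct monic polynomials are never associated. -/

open Polynomial

namespace IsKrullDomain

variable {D : Type*} [CommRing D] [IsDomain D]

theorem heightOnePrime_span_singleton (hD : IsKrullDomain D) {π : D} (hπ : Prime π) :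
    HeightOnePrime D (Ideal.span {π}) := by
  have hπK : algebraMap D (FractionRing D) π ≠ 0 :=
    (map_ne_zero_iff _ (IsFractionRing.injective D _)).mpr hπ.ne_zero
  obtain ⟨P, hP, hπP⟩ : ∃ P : Ideal D, HeightOnePrime D P ∧ π ∈ P := by
    by_contra! h
    -- Otherwise `π` is a unit in every `D_P`, so `π⁻¹ ∈ ⋂ D_P = D`.
    obtain ⟨d, hd⟩ := hD.2.2 (algebraMap D (FractionRing D) π)⁻¹ fun P hP =>
      ⟨1, π, h P hP, by rw [map_one, inv_mul_cancel₀ hπK]⟩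
    refine hπ.not_isUnit (.of_mul_eq_one d (IsFractionRing.injective D (FractionRing D) ?_))
    rw [map_mul, map_one, ← hd, mul_inv_cancel₀ hπK]
  have hle : Ideal.span {π} ≤ P := (Ideal.span_singleton_le_iff_mem P).mpr hπP
  have hprime : (Ideal.span {π}).IsPrime := (Ideal.span_singleton_prime hπ.ne_zero).mpr hπ
  rcases hle.lt_or_eq with hlt | heq
  · exact absurd (hP.2.2 _ hprime hlt) (by simpa [Ideal.span_singleton_eq_bot] using hπ.ne_zero)
  · exact heq ▸ hP

theorem finiteMultiplicity (hD : IsKrullDomain D) {π s : D} (hπ : Prime π) (hs : s ≠ 0) :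
    FiniteMultiplicity π s := by
  have hP := hD.heightOnePrime_span_singleton hπ
  have := hP.1
  have := hD.1 _ hP
  let L := Localization.AtPrime (Ideal.span {π})
  have hπL : ¬IsUnit (algebraMap D L π) := by
    rw [IsLocalization.AtPrime.isUnit_to_map_iff L (Ideal.span {π}), Ideal.mem_primeCompl_iff,
      not_not]
    exact Ideal.mem_span_singleton_self π
  have hsL : algebraMap D L s ≠ 0 := (map_ne_zero_iff _ (IsLocalization.injective
    (M := (Ideal.span {π}).primeCompl) L (Ideal.primeCompl_le_nonZeroDivisors _))).mpr hs
  obtain ⟨m, hm⟩ := FiniteMultiplicity.of_not_isUnit hπL hsL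
  exact ⟨m, fun h => hm (by simpa only [map_pow] using map_dvd (algebraMap D L) h)⟩

theorem isIntegrallyClosed (hD : IsKrullDomain D) : IsIntegrallyClosed D := by
  rw [isIntegrallyClosed_iff (FractionRing D)]
  intro x hx
  obtain ⟨d, hd⟩ := hD.2.2 x fun P hP => by
    have := hP.1
    have := hD.1 P hP
    obtain ⟨y, hy⟩ := IsIntegrallyClosed.isIntegral_iff.mp
      (hx.tower_top (A := Localization.AtPrime P))
    obtain ⟨⟨a, b⟩, hab⟩ := IsLocalization.surj P.primeCompl y
    refine ⟨a, b, b.2, ?_⟩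
    simpa only [map_mul, hy, ← IsScalarTower.algebraMap_apply] using
      congrArg (algebraMap (Localization.AtPrime P) (FractionRing D)) hab
  exact ⟨d, hd.symm⟩

end IsKrullDomain

theorem eq_multiplicity_of_forall_eq_iff {M : Type*} [CommMonoidWithZero M] {π s : M}
    {w : M → ℤ} (hw : ∀ d, d ≠ 0 → ∀ m : ℕ, (w d = m ↔ π ^ m ∣ d ∧ ¬ π ^ (m + 1) ∣ d))
    (hs : FiniteMultiplicity π s) : w s = multiplicity π s :=
  (hw s hs.ne_zero _).mpr
    ⟨pow_multiplicity_dvd π s, hs.not_pow_dvd_of_multiplicity_lt (Nat.lt_succ_self _)⟩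

namespace Polynomial

theorem eval_ne_zero_of_irreducible_map {R K : Type*} [CommRing R] [Field K] {φ : R →+* K}
    (hφ : Function.Injective φ) {p : R[X]} (hp : Irreducible (p.map φ)) (hdeg : p.natDegree ≠ 1)
    (a : R) : p.eval a ≠ 0 := by
  intro ha
  have hroot : (p.map φ).IsRoot (φ a) := by rw [IsRoot, eval_map_apply, ha, map_zero]
  have := degree_eq_one_of_irreducible_of_root hp hroot
  rw [degree_map_eq_of_injective hφ] at this
  exact hdeg (natDegree_eq_of_degree_eq_some this)

section ShiftedBinomial

variable {D : Type*} [CommRing D]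

noncomputable def shiftedBinomial (r π u : D) (n : ℕ) : D[X] :=
  (X - C r) ^ n + C (π ^ (n + 1) * u)

variable {r π u : D} {n : ℕ}

theorem natDegree_shiftedBinomial [Nontrivial D] : (shiftedBinomial r π u n).natDegree = n := by
  rw [shiftedBinomial, natDegree_add_C, (monic_X_sub_C r).natDegree_pow, natDegree_X_sub_C, mul_one]

theorem monic_shiftedBinomial (hn : 0 < n) : (shiftedBinomial r π u n).Monic := by
  unfold shiftedBinomial
  monicity!
  exact fun h => absurd h hn.ne'

theorem eval_shiftedBinomial (a : D) :
    (shiftedBinomial r π u n).eval a = (a - r) ^ n + π ^ (n + 1) * u := by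
  simp [shiftedBinomial]

theorem shiftedBinomial_injective [IsDomain D] (hπ : π ≠ 0) :
    Function.Injective fun u => shiftedBinomial r π u n := fun _ _ h =>
  mul_left_cancel₀ (pow_ne_zero _ hπ) (C_injective (add_left_cancel h))

theorem pow_dvd_eval_shiftedBinomial {a : D} (ha : π ∣ a - r) :
    π ^ n ∣ (shiftedBinomial r π u n).eval a := by
  rw [eval_shiftedBinomial]
  exact dvd_add (pow_dvd_pow_of_dvd ha n) ((pow_dvd_pow π n.le_succ).mul_right u)

theorem not_pow_succ_dvd_eval_add_shiftedBinomial [IsDomain D] (hπ : Prime π) :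
    ¬ π ^ (n + 1) ∣ (shiftedBinomial r π u n).eval (r + π) := by
  rw [eval_shiftedBinomial, add_sub_cancel_left, dvd_add_left (dvd_mul_right _ _), pow_succ]
  exact fun h => hπ.not_isUnit (isUnit_of_dvd_one
    ((mul_dvd_mul_iff_left (pow_ne_zero n hπ.ne_zero)).mp (by rwa [mul_one])))

theorem not_dvd_eval_shiftedBinomial (hπ : Prime π) {a : D} (ha : ¬ π ∣ a - r) :
    ¬ π ∣ (shiftedBinomial r π u n).eval a := by
  rw [eval_shiftedBinomial, dvd_add_left ((dvd_pow_self π n.succ_ne_zero).mul_right u)]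
  exact fun h => ha (hπ.dvd_of_dvd_pow h)

theorem irreducible_X_pow_add_C_mul [IsDomain D] (hπ : Prime π) (hu : ¬ π ∣ u) (hn : 0 < n) :
    Irreducible (X ^ n + C (π * u) : D[X]) := by
  have hmonic : (X ^ n + C (π * u) : D[X]).Monic := monic_X_pow_add_C _ hn.ne'
  have hprime : (Ideal.span {π}).IsPrime := (Ideal.span_singleton_prime hπ.ne_zero).mpr hπ
  refine IsEisensteinAt.irreducible ?_ hprime hmonic.isPrimitive (by rwa [natDegree_X_pow_add_C])
  refine hmonic.isEisensteinAt_of_mem_of_notMem hprime.ne_top (fun {i} hi => ?_) ?_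
  · rw [natDegree_X_pow_add_C] at hi
    rw [coeff_add, coeff_X_pow, if_neg hi.ne, zero_add, coeff_C]
    split_ifs
    · exact Ideal.mem_span_singleton.mpr (dvd_mul_right π u)
    · exact Ideal.zero_mem _
  · rw [coeff_add, coeff_X_pow, if_neg hn.ne, zero_add, coeff_C_zero, Ideal.span_singleton_pow,
      Ideal.mem_span_singleton, pow_two]
    exact fun h => hu ((mul_dvd_mul_iff_left hπ.ne_zero).mp h)

theorem irreducible_map_shiftedBinomial [IsDomain D] [IsIntegrallyClosed D] {K : Type*} [Field K]
    [Algebra D K] [IsFractionRing D K] (hπ : Prime π) (hu : ¬ π ∣ u) (hn : 0 < n) :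
    Irreducible ((shiftedBinomial r π u n).map (algebraMap D K)) := by
  set φ := algebraMap D K
  have hπK : φ π ≠ 0 := (map_ne_zero_iff _ (IsFractionRing.injective D K)).mpr hπ.ne_zero
  have hEisenstein : Irreducible ((X ^ n + C (π * u) : D[X]).map φ) :=
    (monic_X_pow_add_C _ hn.ne').irreducible_iff_irreducible_map_fraction_map.mp
      (irreducible_X_pow_add_C_mul hπ hu hn)
  let := invertibleOfNonzero hπK
  have hsubst : algEquivCMulXAddC (φ π) (φ r) ((shiftedBinomial r π u n).map φ) =
      C (φ π ^ n) * (X ^ n + C (π * u) : D[X]).map φ := by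
    simp only [shiftedBinomial, algEquivCMulXAddC_apply, Polynomial.map_add, Polynomial.map_pow,
      Polynomial.map_sub, map_X, map_C, map_add, map_pow, map_sub, aeval_X, aeval_C, algebraMap_eq]
    simp only [map_mul, map_pow]
    ring
  rw [← MulEquiv.irreducible_iff (algEquivCMulXAddC (φ π) (φ r)), hsubst,
    irreducible_isUnit_mul (isUnit_C.mpr ((isUnit_iff_ne_zero.mpr hπK).pow n))]
  exact hEisenstein

end ShiftedBinomial

end Polynomial

theorem stmt15_general (D : Type*) [CommRing D] [IsDomain D] (hD : IsKrullDomain D)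
    (π : D) (hπ : Prime π)
    (v : FractionRing D → ℤ)
    (hv_char : ∀ d : D, d ≠ 0 → ∀ m : ℕ,
      (v (algebraMap D (FractionRing D) d) = (m : ℤ) ↔ π ^ m ∣ d ∧ ¬ π ^ (m + 1) ∣ d))
    (n : ℕ) (hn : 2 ≤ n) (r : D) :
    ∃ T : Set (Polynomial D), T.Infinite ∧
      (∀ F ∈ T, F.natDegree = n ∧
        Irreducible (F.map (algebraMap D (FractionRing D))) ∧
        (∀ a : D, a - r ∈ Ideal.span {π} →
          (n : ℤ) ≤ v (algebraMap D (FractionRing D) (F.eval a))) ∧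
        (∃ a : D, a - r ∈ Ideal.span {π} ∧
          v (algebraMap D (FractionRing D) (F.eval a)) = (n : ℤ)) ∧
        (∀ a : D, a - r ∉ Ideal.span {π} →
          v (algebraMap D (FractionRing D) (F.eval a)) = 0)) ∧
      (∀ F ∈ T, ∀ G ∈ T, F ≠ G →
        ¬ Associated (F.map (algebraMap D (FractionRing D)))
            (G.map (algebraMap D (FractionRing D)))) := by
  have := hD.isIntegrallyClosed
  have : Infinite D :=
    .of_injective (π ^ ·) (pow_injective_of_not_isUnit hπ.not_isUnit hπ.ne_zero)
  have hinj := IsFractionRing.injective D (FractionRing D)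
  have hu (d : D) : ¬ π ∣ 1 + π * d := fun h =>
    hπ.not_isUnit (isUnit_of_dvd_one ((dvd_add_left (dvd_mul_right π d)).mp h))
  set F : D → D[X] := fun d => shiftedBinomial r π (1 + π * d) n
  have hirr (d : D) : Irreducible ((F d).map (algebraMap D (FractionRing D))) :=
    irreducible_map_shiftedBinomial hπ (hu d) (by omega)
  refine ⟨Set.range F, Set.infinite_range_of_injective ((shiftedBinomial_injective hπ.ne_zero).comp
    fun _ _ h => mul_left_cancel₀ hπ.ne_zero (add_left_cancel h)), ?_, ?_⟩
  · rintro _ ⟨d, rfl⟩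
    have hne : ∀ a, (F d).eval a ≠ 0 := eval_ne_zero_of_irreducible_map hinj (hirr d)
      (by rw [natDegree_shiftedBinomial]; omega)
    simp only [Ideal.mem_span_singleton]
    refine ⟨natDegree_shiftedBinomial, hirr d, fun a ha => ?_, ⟨r + π, by simp, ?_⟩, fun a ha => ?_⟩
    · have hfin := hD.finiteMultiplicity hπ (hne a)
      rw [eq_multiplicity_of_forall_eq_iff (w := fun s => v (algebraMap D _ s)) hv_char hfin]
      exact_mod_cast hfin.le_multiplicity_of_pow_dvd (pow_dvd_eval_shiftedBinomial ha)
    · exact (hv_char _ (hne _) n).mpr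
        ⟨pow_dvd_eval_shiftedBinomial (by simp), not_pow_succ_dvd_eval_add_shiftedBinomial hπ⟩
    · exact (hv_char _ (hne a) 0).mpr ⟨by simp, by simpa using not_dvd_eval_shiftedBinomial hπ ha⟩
  · rintro _ ⟨d₁, rfl⟩ _ ⟨d₂, rfl⟩ hne hassoc
    exact hne (map_injective _ hinj (eq_of_monic_of_associated
      ((monic_shiftedBinomial (by omega)).map _) ((monic_shiftedBinomial (by omega)).map _) hassoc))

/-- For a Krull domain `D` with prime element `π`, finite residue ring `D/πD`, normalized
valuation `v` at `πD`, `n ≥ 2` and a residue class `R = r + πD`, there exist infinitely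
many pairwise non-associated (over `K`) polynomials `F ∈ D[X]` of degree `n`, irreducible
over `K`, with `min {v(F(a)) : a ∈ R} = n` and `v(F(a)) = 0` for all `a ∈ D \ R`. -/
theorem stmt15 (D : Type*) [CommRing D] [IsDomain D] (hD : IsKrullDomain D)
    (π : D) (hπ : Prime π) (hfin : Finite (D ⧸ Ideal.span {π}))
    (v : FractionRing D → ℤ)
    (hv_mul : ∀ x y : FractionRing D, x ≠ 0 → y ≠ 0 → v (x * y) = v x + v y)
    (hv_char : ∀ d : D, d ≠ 0 → ∀ m : ℕ,
      (v (algebraMap D (FractionRing D) d) = (m : ℤ) ↔ π ^ m ∣ d ∧ ¬ π ^ (m + 1) ∣ d))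
    (n : ℕ) (hn : 2 ≤ n) (r : D) :
    ∃ T : Set (Polynomial D), T.Infinite ∧
      (∀ F ∈ T, F.natDegree = n ∧
        Irreducible (F.map (algebraMap D (FractionRing D))) ∧
        (∀ a : D, a - r ∈ Ideal.span {π} →
          (n : ℤ) ≤ v (algebraMap D (FractionRing D) (F.eval a))) ∧
        (∃ a : D, a - r ∈ Ideal.span {π} ∧
          v (algebraMap D (FractionRing D) (F.eval a)) = (n : ℤ)) ∧
        (∀ a : D, a - r ∉ Ideal.span {π} →
          v (algebraMap D (FractionRing D) (F.eval a)) = 0)) ∧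
      (∀ F ∈ T, ∀ G ∈ T, F ≠ G →
        ¬ Associated (F.map (algebraMap D (FractionRing D)))
            (G.map (algebraMap D (FractionRing D)))) :=
  stmt15_general D hD π hπ v hv_char n hn r
end
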